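/- arXiv:1503.01504 — 2 statements merged into one kernel-verified Lean document; each statement's English description precedes it below -/
import Mathlib

section
/- Let d, n ≥ 1 be integers and let α, L > 0 and 0 < ε₀ ≤ 1. Set τ₁ = max(1, d/(C_α·α·L)), a_n = (τ₁ ln n / n)^{1/α} and b_n = n^{−1/α}. Then for every real number x ≥ 0 satisfying a_n + b_n·x ≤ ε₀ and every pair (μ,K) ∈ M(α,L,ε₀), the probability (under the n-fold product of μ) of the event {d_H(K̂ₙ, K) ≥ 2a_n + 2b_n·x} is at most 12^d · exp(−C_α·L·x^α). -/
/-!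
Let `ε = a_n + b_n x` and cover the unit sphere by an `ε/4`-net `F`; a volume argument gives
`|F| ≤ (1 + 8/ε)^d`. If the sample meets the `ε`-cap of `K` in every direction of `F`, then, the
support function of `K ⊆ B(0,1)` being `1`-Lipschitz, it meets the `3ε/2`-cap in every direction,
and projecting a point of `K` onto the hull shows `d_H(K̂ₙ, K) ≤ 3ε/2 < 2ε`. A union bound over
`F` bounds the probability by `|F| (1 - L ε^α)^n ≤ |F| exp(-n L ε^α)`. Superadditivity
`C_α (a^α + b^α) ≤ (a + b)^α` and the choice of `τ₁` give `n L ε^α ≥ (d/α) log n + C_α L x^α`,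
which absorbs `|F| ≤ (12 n^{1/α})^d`. For `n ≤ 2` the right-hand side is at least `1`, because
`C_α L x^α ≤ n L ε₀^α ≤ n` and `12 e^{-2} ≥ 1`.
-/

open MeasureTheory Metric Set
open scoped RealInnerProductSpace ENNReal NNReal

noncomputable section

abbrev Euc (d : ℕ) := EuclideanSpace ℝ (Fin d)

def IsConvexBody {d : ℕ} (K : Set (Euc d)) : Prop :=
  Convex ℝ K ∧ IsCompact K ∧ (interior K).Nonempty

def suppFn {d : ℕ} (K : Set (Euc d)) (u : Euc d) : ℝ :=
  sSup ((fun x => (inner ℝ u x : ℝ)) '' K)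

def cap {d : ℕ} (K : Set (Euc d)) (u : Euc d) (ε : ℝ) : Set (Euc d) :=
  {x ∈ K | suppFn K u - ε ≤ (inner ℝ u x : ℝ)}

def measSupp {d : ℕ} (μ : Measure (Euc d)) : Set (Euc d) :=
  (⋃₀ {O : Set (Euc d) | IsOpen O ∧ μ O = 0})ᶜ

def MemM {d : ℕ} (α L ε₀ : ℝ) (μ : Measure (Euc d)) (K : Set (Euc d)) : Prop :=
  IsProbabilityMeasure μ ∧ IsConvexBody K ∧ K ⊆ closedBall 0 1 ∧
    measSupp μ ⊆ K ∧
    ∀ u : Euc d, ‖u‖ = 1 → ∀ ε : ℝ, ε ∈ Icc 0 ε₀ →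
      ENNReal.ofReal (L * ε ^ α) ≤ μ (cap K u ε)

def Cconst (α : ℝ) : ℝ := ⨅ t : {t : ℝ // 0 < t}, (1 + t.1) ^ α / (1 + t.1 ^ α)

def hullOf {d n : ℕ} (ω : Fin n → Euc d) : Set (Euc d) := convexHull ℝ (Set.range ω)

def jointLaw {d : ℕ} (n : ℕ) (μ : Measure (Euc d)) : Measure (Fin n → Euc d) :=
  Measure.pi fun _ => μ

def sphereσ (d : ℕ) : Measure (Euc d) :=
  (Measure.hausdorffMeasure ((d:ℝ)-1) (sphere (0:Euc d) 1))⁻¹ •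
    (Measure.hausdorffMeasure ((d:ℝ)-1) : Measure (Euc d)).restrict (sphere (0:Euc d) 1)

def lpNorm (d : ℕ) (p : ℝ) (f : Euc d → ℝ) : ℝ :=
  (∫ u, |f u| ^ p ∂(sphereσ d)) ^ (1/p)

def unitBallVol (p : ℕ) : ℝ := (volume (closedBall (0 : Euc p) 1)).toReal

def unifOn {d : ℕ} (K : Set (Euc d)) : Measure (Euc d) := (volume K)⁻¹ • volume.restrict K

def unifBd {d : ℕ} (K : Set (Euc d)) : Measure (Euc d) :=
  (Measure.hausdorffMeasure ((d:ℝ)-1) (frontier K))⁻¹ •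
    (Measure.hausdorffMeasure ((d:ℝ)-1) : Measure (Euc d)).restrict (frontier K)

def Rolling {d : ℕ} (r : ℝ) (K : Set (Euc d)) : Prop :=
  ∀ x ∈ frontier K, ∃ c : Euc d, x ∈ closedBall c r ∧ closedBall c r ⊆ K

def Kdr1 (d : ℕ) (r : ℝ) : Set (Set (Euc d)) :=
  {K | IsConvexBody K ∧ K ⊆ closedBall 0 1 ∧ Rolling r K}

def Krd (d : ℕ) (r : ℝ) : Set (Set (Euc d)) :=
  {K | IsConvexBody K ∧ Rolling (r * ((volume K).toReal / unitBallVol d) ^ (1/(d:ℝ))) K}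

def dL {d : ℕ} (K K' : Set (Euc d)) : ℝ :=
  sInf {ε : ℝ | 0 ≤ ε ∧ ∃ a : Euc d,
    (fun y => a + (1 - ε) • (y - a)) '' K ⊆ K' ∧
    K' ⊆ (fun y => a + (1 + ε) • (y - a)) '' K}

open Filter Topology

section Cconst

variable {α : ℝ}

lemma bddBelow_range_Cconst (α : ℝ) :
    BddBelow (range fun t : {t : ℝ // 0 < t} => (1 + t.1) ^ α / (1 + t.1 ^ α)) :=
  ⟨0, by rintro _ ⟨t, rfl⟩; have := t.2; positivity⟩

lemma Cconst_le_div {t : ℝ} (ht : 0 < t) : Cconst α ≤ (1 + t) ^ α / (1 + t ^ α) :=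
  ciInf_le (bddBelow_range_Cconst α) ⟨t, ht⟩

lemma one_half_le_Cconst (hα : 0 ≤ α) : 1 / 2 ≤ Cconst α := by
  refine le_ciInf fun ⟨t, ht⟩ => ?_
  have ht' : 0 ≤ t ^ α := Real.rpow_nonneg ht.le α
  rw [le_div_iff₀ (by positivity)]
  rcases le_total t 1 with h | h
  · linarith [Real.rpow_le_one ht.le h hα, Real.one_le_rpow (by linarith : 1 ≤ 1 + t) hα]
  · linarith [Real.one_le_rpow h hα, Real.rpow_le_rpow ht.le (by linarith : t ≤ 1 + t) hα]

lemma Cconst_le_one (hα : 0 < α) : Cconst α ≤ 1 := by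
  have hlim : Tendsto (fun t : ℝ => (1 + t) ^ α / (1 + t ^ α)) (𝓝[>] 0) (𝓝 1) := by
    have hcont : ContinuousAt (fun t : ℝ => (1 + t) ^ α / (1 + t ^ α)) 0 :=
      ((continuousAt_const.add continuousAt_id).rpow_const (Or.inl (by norm_num))).div
        (continuousAt_const.add (continuousAt_id.rpow_const (Or.inr hα.le)))
        (by simp [Real.zero_rpow hα.ne'])
    simpa [Real.zero_rpow hα.ne'] using hcont.tendsto.mono_left nhdsWithin_le_nhds
  exact ge_of_tendsto hlim (eventually_nhdsWithin_of_forall fun t ht => Cconst_le_div ht)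

lemma Cconst_mul_rpow_add_rpow_le (hα : 0 < α) {a b : ℝ} (ha : 0 ≤ a) (hb : 0 ≤ b) :
    Cconst α * (a ^ α + b ^ α) ≤ (a + b) ^ α := by
  rcases ha.eq_or_lt with rfl | ha
  · simpa [Real.zero_rpow hα.ne'] using
      mul_le_of_le_one_left (Real.rpow_nonneg hb α) (Cconst_le_one hα)
  rcases hb.eq_or_lt with rfl | hb
  · simpa [Real.zero_rpow hα.ne'] using
      mul_le_of_le_one_left (Real.rpow_nonneg ha.le α) (Cconst_le_one hα)
  have key := Cconst_le_div (α := α) (div_pos hb ha)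
  rw [le_div_iff₀ (by positivity)] at key
  have hsum : (a + b) ^ α = a ^ α * (1 + b / a) ^ α := by
    rw [← Real.mul_rpow ha.le (by positivity)]; field_simp
  have hb' : b ^ α = a ^ α * (b / a) ^ α := by
    rw [← Real.mul_rpow ha.le (by positivity)]; field_simp
  calc Cconst α * (a ^ α + b ^ α) = a ^ α * (Cconst α * (1 + (b / a) ^ α)) := by rw [hb']; ring
    _ ≤ a ^ α * (1 + b / a) ^ α := by gcongr
    _ = (a + b) ^ α := hsum.symm

end Cconst

section Packing

variable {E : Type*} [NormedAddCommGroup E] [NormedSpace ℝ E] [MeasurableSpace E] [BorelSpace E]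
  [FiniteDimensional ℝ E] {x : E} {r : ℝ} {δ : ℝ≥0}

lemma Metric.IsSeparated.card_le_of_subset_closedBall {s : Finset E} (hr : 0 ≤ r) (hδ : 0 < δ)
    (hs : IsSeparated δ (s : Set E)) (hsr : (s : Set E) ⊆ closedBall x r) :
    (s.card : ℝ) ≤ ((r + δ / 2) / (δ / 2)) ^ Module.finrank ℝ E := by
  set μ : Measure E := Measure.addHaar
  have hδ2 : (0 : ℝ) < δ / 2 := by positivity
  have hdisj : (s : Set E).PairwiseDisjoint (closedBall · (δ / 2)) := fun y hy z hz hyz => by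
    have hyz : (δ : ℝ≥0∞) < edist y z := hs hy hz hyz
    rw [edist_nndist, ENNReal.coe_lt_coe, ← NNReal.coe_lt_coe, coe_nndist] at hyz
    exact closedBall_disjoint_closedBall (by linarith)
  have hsub : (⋃ y ∈ s, closedBall y (δ / 2)) ⊆ closedBall x (r + δ / 2) :=
    iUnion₂_subset fun y hy =>
      closedBall_subset_closedBall' (by linarith [mem_closedBall.1 (hsr hy)])
  have hvol := measureReal_mono (μ := μ) hsub measure_closedBall_lt_top.ne
  rw [measureReal_biUnion_finset hdisj (fun _ _ => measurableSet_closedBall)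
    (fun _ _ => measure_closedBall_lt_top.ne)] at hvol
  simp only [Measure.addHaar_real_closedBall' μ _ hδ2.le, Finset.sum_const, nsmul_eq_mul,
    Measure.addHaar_real_closedBall' μ _ (by positivity : 0 ≤ r + δ / 2)] at hvol
  have hV : 0 < μ.real (closedBall 0 1) :=
    ENNReal.toReal_pos (measure_closedBall_pos μ 0 one_pos).ne' measure_closedBall_lt_top.ne
  rw [div_pow, le_div_iff₀ (by positivity)]
  exact le_of_mul_le_mul_right (by linarith) hV

lemma Metric.packingNumber_ne_top_of_subset_closedBall {A : Set E} (hr : 0 ≤ r) (hδ : 0 < δ)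
    (hA : A ⊆ closedBall x r) : packingNumber δ A ≠ ⊤ := by
  set N := ⌊((r + δ / 2) / (δ / 2)) ^ Module.finrank ℝ E⌋₊
  refine ne_top_of_le_ne_top (ENat.natCast_ne_top N) (iSup₂_le fun C hCA => iSup_le fun hC => ?_)
  by_contra! hN
  obtain ⟨t, htC, ht⟩ := exists_subset_encard_eq (Order.add_one_le_of_lt hN)
  have htfin : t.Finite := finite_of_encard_eq_coe ht
  have hcard : htfin.toFinset.card = N + 1 := by
    rw [htfin.encard_eq_coe_toFinset_card] at ht
    exact_mod_cast ht
  have hle := IsSeparated.card_le_of_subset_closedBall (s := htfin.toFinset) hr hδ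
    (by simpa using hC.subset htC) (by simpa using htC.trans (hCA.trans hA))
  rw [hcard, Nat.cast_add_one] at hle
  exact (Nat.lt_floor_add_one _).not_ge hle

lemma Metric.exists_finset_isCover_card_le {A : Set E} (hr : 0 ≤ r) (hδ : 0 < δ)
    (hA : A ⊆ closedBall x r) :
    ∃ F : Finset E, (F : Set E) ⊆ A ∧ IsCover δ A F ∧
      (F.card : ℝ) ≤ ((r + δ / 2) / (δ / 2)) ^ Module.finrank ℝ E := by
  have hfin := packingNumber_ne_top_of_subset_closedBall hr hδ hA
  have hF : (maximalSeparatedSet δ A).Finite := by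
    rw [← encard_ne_top_iff, encard_maximalSeparatedSet hfin]
    exact hfin
  refine ⟨hF.toFinset, by simpa using maximalSeparatedSet_subset,
    by simpa using isCover_maximalSeparatedSet hfin, ?_⟩
  exact IsSeparated.card_le_of_subset_closedBall hr hδ
    (by simpa using isSeparated_maximalSeparatedSet)
    (by simpa using maximalSeparatedSet_subset.trans hA)

end Packing

section SupportFunction

variable {d : ℕ} {K : Set (Euc d)}

lemma inner_le_suppFn (hK : IsCompact K) {x : Euc d} (hx : x ∈ K) (u : Euc d) :
    ⟪u, x⟫ ≤ suppFn K u :=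
  le_csSup (hK.image (continuous_const.inner continuous_id)).bddAbove ⟨x, hx, rfl⟩

lemma exists_inner_eq_suppFn (hK : IsCompact K) (hne : K.Nonempty) (u : Euc d) :
    ∃ x ∈ K, ⟪u, x⟫ = suppFn K u :=
  (hK.image (continuous_const.inner continuous_id)).sSup_mem (hne.image _)

lemma suppFn_le_add_norm_sub (hK : IsCompact K) (hne : K.Nonempty) (hK1 : K ⊆ closedBall 0 1)
    (u v : Euc d) : suppFn K u ≤ suppFn K v + ‖u - v‖ := by
  obtain ⟨x, hx, hxu⟩ := exists_inner_eq_suppFn hK hne u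
  have hx1 : ‖x‖ ≤ 1 := mem_closedBall_zero_iff.1 (hK1 hx)
  have : ⟪u - v, x⟫ ≤ ‖u - v‖ :=
    (real_inner_le_norm _ _).trans (mul_le_of_le_one_right (norm_nonneg _) hx1)
  rw [inner_sub_left] at this
  linarith [inner_le_suppFn hK hx v]

lemma hausdorffDist_le_of_forall_suppFn_sub_le_inner {P : Set (Euc d)} (hK : IsCompact K)
    (hPK : P ⊆ K) (hPc : Convex ℝ P) (hPcl : IsClosed P) (hPne : P.Nonempty) {η : ℝ} (hη : 0 ≤ η)
    (hP : ∀ u : Euc d, ‖u‖ = 1 → ∃ X ∈ P, suppFn K u - η ≤ ⟪u, X⟫) :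
    hausdorffDist P K ≤ η := by
  refine hausdorffDist_le_of_mem_dist hη (fun p hp => ⟨p, hPK hp, by simpa using hη⟩) fun y hy => ?_
  obtain ⟨p, hp, hpmin⟩ := exists_norm_eq_iInf_of_complete_convex hPne hPcl.isComplete hPc y
  have hproj := (norm_eq_iInf_iff_real_inner_le_zero hPc hp).1 hpmin
  refine ⟨p, hp, ?_⟩
  rw [dist_eq_norm]
  rcases (norm_nonneg (y - p)).eq_or_lt with h0 | hpos
  · rw [← h0]; exact hη
  set u := ‖y - p‖⁻¹ • (y - p)
  obtain ⟨X, hX, hXu⟩ := hP u (by simp [u, norm_smul, hpos.ne'])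
  have hXp : ⟪u, X - p⟫ ≤ 0 := by
    rw [real_inner_smul_left]
    exact mul_nonpos_of_nonneg_of_nonpos (inv_nonneg.2 hpos.le) (hproj X hX)
  have hyp : ⟪u, y - p⟫ = ‖y - p‖ := by
    rw [real_inner_smul_left, real_inner_self_eq_norm_sq]; field_simp
  rw [inner_sub_right] at hXp hyp
  linarith [inner_le_suppFn hK hy u]

lemma hausdorffDist_convexHull_le_of_isCover (hKc : Convex ℝ K) (hK : IsCompact K)
    (hK1 : K ⊆ closedBall 0 1) {S : Set (Euc d)} (hS : S.Finite) (hSK : S ⊆ K) {ε : ℝ}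
    (hε : 0 ≤ ε) {δ : ℝ≥0} {F : Set (Euc d)} (hF : IsCover δ (sphere 0 1) F)
    (hcap : ∀ u ∈ F, ∃ X ∈ S, X ∈ cap K u ε) :
    hausdorffDist (convexHull ℝ S) K ≤ ε + 2 * δ := by
  rcases S.eq_empty_or_nonempty with rfl | hSne
  · simp only [convexHull_empty, hausdorffDist_empty']; positivity
  have hKne : K.Nonempty := hSne.mono hSK
  refine hausdorffDist_le_of_forall_suppFn_sub_le_inner hK (convexHull_min hSK hKc)
    (convex_convexHull ℝ S) (hS.isCompact_convexHull ℝ).isClosed (hSne.convexHull) (by positivity)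
    fun u hu => ?_
  obtain ⟨v, hvF, huv⟩ := mem_iUnion₂.1 <|
    isCover_iff_subset_iUnion_closedBall.1 hF (mem_sphere_zero_iff_norm.2 hu)
  obtain ⟨X, hXS, -, hXv⟩ := hcap v hvF
  refine ⟨X, subset_convexHull ℝ S hXS, ?_⟩
  have huv : ‖u - v‖ ≤ δ := by rwa [mem_closedBall, dist_eq_norm] at huv
  have hX1 : ‖X‖ ≤ 1 := mem_closedBall_zero_iff.1 (hK1 (hSK hXS))
  have hinner : -‖u - v‖ ≤ ⟪u - v, X⟫ := neg_le_of_abs_le <|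
    (abs_real_inner_le_norm _ _).trans (mul_le_of_le_one_right (norm_nonneg _) hX1)
  rw [inner_sub_left] at hinner
  linarith [suppFn_le_add_norm_sub hK hKne hK1 u v]

end SupportFunction

section Sampling

variable {d : ℕ}

lemma measure_compl_measSupp (μ : Measure (Euc d)) : μ (measSupp μ)ᶜ = 0 := by
  obtain ⟨T, hTc, hTS, hTU⟩ := TopologicalSpace.isOpen_sUnion_countable
    {O : Set (Euc d) | IsOpen O ∧ μ O = 0} fun _ hO => hO.1
  rw [measSupp, compl_compl, ← hTU, measure_sUnion_null_iff hTc]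
  exact fun O hO => (hTS hO).2

lemma isClosed_cap {K : Set (Euc d)} (hK : IsClosed K) (u : Euc d) (ε : ℝ) :
    IsClosed (cap K u ε) :=
  hK.inter (isClosed_le continuous_const (continuous_const.inner continuous_id) :
    IsClosed {x : Euc d | suppFn K u - ε ≤ ⟪u, x⟫})

lemma jointLaw_forall_mem (n : ℕ) (μ : Measure (Euc d)) [SigmaFinite μ] (B : Set (Euc d)) :
    jointLaw n μ {ω | ∀ j, ω j ∈ B} = μ B ^ n := by
  have : {ω : Fin n → Euc d | ∀ j, ω j ∈ B} = univ.pi fun _ => B := by ext; simp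
  rw [this, jointLaw, Measure.pi_pi, Finset.prod_const, Finset.card_univ, Fintype.card_fin]

lemma ae_jointLaw_forall_mem (n : ℕ) {μ : Measure (Euc d)} [SigmaFinite μ] {B : Set (Euc d)}
    (hB : ∀ᵐ x ∂μ, x ∈ B) : ∀ᵐ ω ∂jointLaw n μ, ∀ j, ω j ∈ B :=
  ae_all_iff.2 fun _ => Measure.tendsto_eval_ae_ae.eventually hB

variable {α L ε₀ : ℝ} {μ : Measure (Euc d)} {K : Set (Euc d)}

instance isProbabilityMeasure_jointLaw {n : ℕ} [IsProbabilityMeasure μ] :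
    IsProbabilityMeasure (jointLaw n μ) := by
  unfold jointLaw; infer_instance

lemma MemM.mul_rpow_le_one (hd : 1 ≤ d) (h : MemM α L ε₀ μ K) (hε₀ : 0 ≤ ε₀) :
    L * ε₀ ^ α ≤ 1 := by
  obtain ⟨hμ, -, -, -, hcap⟩ := h
  have hu : ‖EuclideanSpace.single (⟨0, hd⟩ : Fin d) (1 : ℝ)‖ = 1 := by simp
  exact ENNReal.ofReal_le_one.1 ((hcap _ hu ε₀ ⟨hε₀, le_rfl⟩).trans prob_le_one)

lemma MemM.measure_compl_cap_le (h : MemM α L ε₀ μ K) {u : Euc d} (hu : ‖u‖ = 1) {ε : ℝ}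
    (hε : ε ∈ Icc 0 ε₀) : μ (cap K u ε)ᶜ ≤ ENNReal.ofReal (Real.exp (-(L * ε ^ α))) := by
  obtain ⟨hμ, ⟨-, hK, -⟩, -, -, hcap⟩ := h
  have hmeas := (isClosed_cap hK.isClosed u ε).measurableSet
  have hL : L * ε ^ α ≤ μ.real (cap K u ε) :=
    (ENNReal.ofReal_le_iff_le_toReal (measure_ne_top μ _)).1 (hcap u hu ε hε)
  rw [ENNReal.le_ofReal_iff_toReal_le (measure_ne_top μ _) (Real.exp_nonneg _), ← measureReal_def,
    probReal_compl_eq_one_sub hmeas]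
  linarith [Real.add_one_le_exp (-(L * ε ^ α))]

lemma MemM.jointLaw_lt_hausdorffDist_le_card_mul (h : MemM α L ε₀ μ K) (n : ℕ) {ε : ℝ}
    (hε : ε ∈ Icc 0 ε₀) {δ : ℝ≥0} {F : Finset (Euc d)} (hFs : (F : Set (Euc d)) ⊆ sphere 0 1)
    (hF : IsCover δ (sphere 0 1) (F : Set (Euc d))) :
    jointLaw n μ {ω | ε + 2 * δ < hausdorffDist (hullOf ω) K}
      ≤ F.card * ENNReal.ofReal (Real.exp (-(n * (L * ε ^ α)))) := by
  obtain ⟨hμ, ⟨hKc, hK, -⟩, hK1, hsupp, -⟩ := id h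
  have hae : ∀ᵐ ω ∂jointLaw n μ, ∀ j, ω j ∈ K :=
    ae_jointLaw_forall_mem n <|
      measure_mono_null (compl_subset_compl.2 hsupp) (measure_compl_measSupp μ)
  have hsub : {ω | ε + 2 * δ < hausdorffDist (hullOf ω) K}
      ≤ᵐ[jointLaw n μ] ⋃ u ∈ F, {ω | ∀ j, ω j ∈ (cap K u ε)ᶜ} := by
    filter_upwards [hae] with ω hωK
    intro (hω : ε + 2 * δ < hausdorffDist (hullOf ω) K)
    show ω ∈ ⋃ u ∈ F, _
    by_contra hmiss
    simp only [mem_iUnion₂, mem_ofPred_eq, mem_compl_iff, not_exists, not_forall, not_not] at hmiss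
    refine hω.not_ge (hausdorffDist_convexHull_le_of_isCover hKc hK hK1 (finite_range ω)
      (range_subset_iff.2 hωK) hε.1 hF fun u hu => ?_)
    obtain ⟨j, hj⟩ := hmiss u hu
    exact ⟨ω j, mem_range_self j, hj⟩
  calc _ ≤ jointLaw n μ (⋃ u ∈ F, {ω | ∀ j, ω j ∈ (cap K u ε)ᶜ}) := measure_mono_ae hsub
    _ ≤ ∑ u ∈ F, μ (cap K u ε)ᶜ ^ n := by
      simpa only [jointLaw_forall_mem] using measure_biUnion_finset_le (μ := jointLaw n μ) F
        fun u => {ω : Fin n → Euc d | ∀ j, ω j ∈ (cap K u ε)ᶜ}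
    _ ≤ ∑ _u ∈ F, ENNReal.ofReal (Real.exp (-(L * ε ^ α))) ^ n := by
      gcongr with u hu
      exact h.measure_compl_cap_le (mem_sphere_zero_iff_norm.1 (hFs hu)) hε
    _ = F.card * ENNReal.ofReal (Real.exp (-(n * (L * ε ^ α)))) := by
      rw [Finset.sum_const, nsmul_eq_mul, ← ENNReal.ofReal_pow (Real.exp_nonneg _),
        ← Real.exp_nat_mul, mul_neg]

lemma MemM.jointLaw_lt_hausdorffDist_le (h : MemM α L ε₀ μ K) (n : ℕ) {ε : ℝ} (hε : 0 < ε)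
    (hεε₀ : ε ≤ ε₀) :
    jointLaw n μ {ω | 3 / 2 * ε < hausdorffDist (hullOf ω) K}
      ≤ ENNReal.ofReal (((1 + ε / 8) / (ε / 8)) ^ d * Real.exp (-(n * (L * ε ^ α)))) := by
  obtain ⟨F, hFs, hF, hFcard⟩ := exists_finset_isCover_card_le (x := (0 : Euc d))
    (δ := (ε / 4).toNNReal) zero_le_one (Real.toNNReal_pos.2 (by positivity))
    sphere_subset_closedBall
  have hδ : ((ε / 4).toNNReal : ℝ) = ε / 4 := Real.coe_toNNReal _ (by positivity)
  rw [hδ, finrank_euclideanSpace_fin] at hFcard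
  calc _ ≤ jointLaw n μ {ω | ε + 2 * (ε / 4).toNNReal < hausdorffDist (hullOf ω) K} :=
        measure_mono fun ω hω => by simp only [mem_ofPred_eq, hδ] at hω ⊢; linarith
    _ ≤ F.card * ENNReal.ofReal (Real.exp (-(n * (L * ε ^ α)))) :=
        h.jointLaw_lt_hausdorffDist_le_card_mul n ⟨hε.le, hεε₀⟩ hFs hF
    _ ≤ _ := by
        rw [← ENNReal.ofReal_natCast, ← ENNReal.ofReal_mul (Nat.cast_nonneg _)]
        gcongr
        exact hFcard.trans_eq (by ring)

end Sampling

section Numerics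

lemma one_le_twelve_pow_mul_exp_neg {d : ℕ} (hd : 1 ≤ d) {c : ℝ} (hc : c ≤ 2) :
    1 ≤ 12 ^ d * Real.exp (-c) := by
  have he : Real.exp 2 ≤ 12 := by
    have : Real.exp 2 = Real.exp 1 * Real.exp 1 := by rw [← Real.exp_add]; norm_num
    nlinarith [Real.exp_one_lt_d9, Real.exp_pos 1]
  calc (1 : ℝ) ≤ 12 * Real.exp (-2) := by
        rw [Real.exp_neg, ← div_eq_mul_inv, le_div_iff₀ (Real.exp_pos 2), one_mul]; exact he
    _ ≤ 12 ^ d * Real.exp (-c) := by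
        gcongr
        exact le_self_pow₀ (by norm_num) (by omega)

variable {α : ℝ}

lemma rpow_neg_inv_mul_rpow (hα : 0 < α) {t y : ℝ} (ht : 0 < t) (hy : 0 ≤ y) :
    (t ^ (-(1 / α)) * y) ^ α = y ^ α / t := by
  rw [Real.mul_rpow (by positivity) hy, ← Real.rpow_mul ht.le, neg_mul, one_div,
    inv_mul_cancel₀ hα.ne', Real.rpow_neg_one, inv_mul_eq_div]

lemma Cconst_mul_mul_rpow_le (hα : 0 < α) {L t x ε₀ : ℝ} (hL : 0 ≤ L) (ht : 0 < t) (hx : 0 ≤ x)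
    (hxε₀ : t ^ (-(1 / α)) * x ≤ ε₀) (hLε₀ : L * ε₀ ^ α ≤ 1) : Cconst α * L * x ^ α ≤ t := by
  have hxα : x ^ α = t * (t ^ (-(1 / α)) * x) ^ α := by
    rw [rpow_neg_inv_mul_rpow hα ht hx]; field_simp
  have hbx := Real.rpow_le_rpow (by positivity) hxε₀ hα.le
  calc Cconst α * L * x ^ α ≤ 1 * L * (t * ε₀ ^ α) := by
        rw [hxα]; gcongr; exact Cconst_le_one hα
    _ = t * (L * ε₀ ^ α) := by ring
    _ ≤ t := mul_le_of_le_one_right ht.le hLε₀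

lemma one_le_rpow_inv_mul_add {n : ℕ} (hn : 3 ≤ n) (hα : 0 < α) {τ x : ℝ} (hτ : 1 ≤ τ)
    (hx : 0 ≤ x) :
    1 ≤ (n : ℝ) ^ (1 / α) * ((τ * Real.log n / n) ^ (1 / α) + (n : ℝ) ^ (-(1 / α)) * x) := by
  have hn0 : (0 : ℝ) < n := by positivity
  have hlog : 1 ≤ Real.log n := by
    have h3 : (3 : ℝ) ≤ n := by exact_mod_cast hn
    rw [Real.le_log_iff_exp_le hn0]
    linarith [Real.exp_one_lt_d9]
  have hτlog : 1 ≤ τ * Real.log n := by nlinarith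
  have hmain : (n : ℝ) ^ (1 / α) * (τ * Real.log n / n) ^ (1 / α) = (τ * Real.log n) ^ (1 / α) := by
    rw [← Real.mul_rpow hn0.le (by positivity), mul_div_cancel₀ _ hn0.ne']
  rw [mul_add, hmain]
  have := Real.one_le_rpow hτlog (by positivity : 0 ≤ 1 / α)
  have : 0 ≤ (n : ℝ) ^ (1 / α) * ((n : ℝ) ^ (-(1 / α)) * x) := by positivity
  linarith

lemma natCast_mul_log_rpow_add_le {d n : ℕ} (hn : 1 ≤ n) (hα : 0 < α) {L τ x : ℝ} (hL : 0 < L)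
    (hτ0 : 0 ≤ τ) (hτ : d / (Cconst α * α * L) ≤ τ) (hx : 0 ≤ x) :
    d * Real.log ((n : ℝ) ^ (1 / α)) + Cconst α * L * x ^ α
      ≤ n * (L * ((τ * Real.log n / n) ^ (1 / α) + (n : ℝ) ^ (-(1 / α)) * x) ^ α) := by
  have hn0 : (0 : ℝ) < n := by positivity
  have hlog : 0 ≤ Real.log n := Real.log_nonneg (by exact_mod_cast hn)
  have hC : 0 < Cconst α := (one_half_le_Cconst hα.le).trans_lt' (by norm_num)
  have hsup := Cconst_mul_rpow_add_rpow_le hα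
    (Real.rpow_nonneg (by positivity : 0 ≤ τ * Real.log n / n) (1 / α))
    (mul_nonneg (Real.rpow_nonneg hn0.le (-(1 / α))) hx)
  have ha : ((τ * Real.log n / n) ^ (1 / α)) ^ α = τ * Real.log n / n := by
    rw [one_div, Real.rpow_inv_rpow (by positivity) hα.ne']
  rw [ha, rpow_neg_inv_mul_rpow hα hn0 hx] at hsup
  have hdτ : d / α ≤ Cconst α * L * τ := by
    rw [div_le_iff₀ (by positivity)] at hτ
    rw [div_le_iff₀ hα]; linarith
  rw [Real.log_rpow hn0]
  calc d * (1 / α * Real.log n) + Cconst α * L * x ^ α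
      ≤ Cconst α * L * τ * Real.log n + Cconst α * L * x ^ α := by
        rw [← mul_assoc, mul_one_div]; gcongr
    _ = n * (L * (Cconst α * (τ * Real.log n / n + x ^ α / n))) := by field_simp
    _ ≤ _ := by gcongr

lemma pow_mul_exp_neg_le_twelve_pow_mul {d : ℕ} {s ε E c : ℝ} (hs : 0 < s) (hsε : 1 ≤ s * ε)
    (hε1 : ε ≤ 1) (hE : d * Real.log s + c ≤ E) :
    ((1 + ε / 8) / (ε / 8)) ^ d * Real.exp (-E) ≤ 12 ^ d * Real.exp (-c) := by
  have hε : 0 < ε := pos_of_mul_pos_right (one_pos.trans_le hsε) hs.le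
  have hs1 : 1 ≤ s := hsε.trans (mul_le_of_le_one_right hs.le hε1)
  have hbase : (1 + ε / 8) / (ε / 8) ≤ 12 * s := by
    rw [div_le_iff₀ (by positivity)]; nlinarith
  calc ((1 + ε / 8) / (ε / 8)) ^ d * Real.exp (-E)
      ≤ (12 * s) ^ d * Real.exp (-(d * Real.log s + c)) := by gcongr
    _ = 12 ^ d * Real.exp (-c) := by
      rw [neg_add, Real.exp_add, Real.exp_neg, Real.exp_nat_mul, Real.exp_log hs, mul_pow]
      field_simp

end Numerics

theorem stmt0_general (d n : ℕ) (hd : 1 ≤ d) (hn : 1 ≤ n)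
    (α L ε₀ : ℝ) (hα : 0 < α) (hL : 0 < L) (hε₀1 : ε₀ ≤ 1)
    (τ₁ aN bN : ℝ)
    (hτ : τ₁ = max 1 (d / (Cconst α * α * L)))
    (ha : aN = (τ₁ * Real.log n / n) ^ (1/α))
    (hb : bN = (n : ℝ) ^ (-(1/α)))
    (x : ℝ) (hx : 0 ≤ x) (hxε : aN + bN * x ≤ ε₀)
    (μ : Measure (Euc d)) (K : Set (Euc d)) (hμK : MemM α L ε₀ μ K) :
    jointLaw n μ {ω : Fin n → Euc d | 2 * aN + 2 * bN * x ≤ hausdorffDist (hullOf ω) K}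
      ≤ ENNReal.ofReal (12 ^ d * Real.exp (-(Cconst α * L * x ^ α))) := by
  have hμ := hμK.1
  have hn0 : (0 : ℝ) < n := by exact_mod_cast hn
  have hτ1 : 1 ≤ τ₁ := hτ ▸ le_max_left _ _
  have haN : 0 ≤ aN := ha ▸ Real.rpow_nonneg (by have := Real.log_natCast_nonneg n; positivity) _
  have hbx : 0 ≤ bN * x := hb ▸ mul_nonneg (Real.rpow_nonneg hn0.le _) hx
  rcases lt_or_ge n 3 with hn3 | hn3
  · refine prob_le_one.trans (ENNReal.one_le_ofReal.2 (one_le_twelve_pow_mul_exp_neg hd ?_))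
    have hn2 : (n : ℝ) ≤ 2 := by exact_mod_cast Nat.le_of_lt_succ hn3
    refine (Cconst_mul_mul_rpow_le (ε₀ := ε₀) hα hL.le hn0 hx ?_ ?_).trans hn2
    · exact hb ▸ (le_add_of_nonneg_left haN).trans hxε
    · exact hμK.mul_rpow_le_one hd ((add_nonneg haN hbx).trans hxε)
  subst ha hb
  set ε := (τ₁ * Real.log n / n) ^ (1 / α) + (n : ℝ) ^ (-(1 / α)) * x
  have hsε : 1 ≤ (n : ℝ) ^ (1 / α) * ε := one_le_rpow_inv_mul_add hn3 hα hτ1 hx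
  have hε : 0 < ε := pos_of_mul_pos_right (one_pos.trans_le hsε) (by positivity)
  calc _ ≤ jointLaw n μ {ω | 3 / 2 * ε < hausdorffDist (hullOf ω) K} :=
        measure_mono fun ω hω => by simp only [mem_ofPred_eq] at hω ⊢; linarith
    _ ≤ ENNReal.ofReal (((1 + ε / 8) / (ε / 8)) ^ d * Real.exp (-(n * (L * ε ^ α)))) :=
        hμK.jointLaw_lt_hausdorffDist_le n hε hxε
    _ ≤ _ := ENNReal.ofReal_le_ofReal <| pow_mul_exp_neg_le_twelve_pow_mul (by positivity) hsε
        (hxε.trans hε₀1)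
        (natCast_mul_log_rpow_add_le hn hα hL (by linarith) (hτ ▸ le_max_right _ _) hx)

theorem stmt0 (d n : ℕ) (hd : 1 ≤ d) (hn : 1 ≤ n)
    (α L ε₀ : ℝ) (hα : 0 < α) (hL : 0 < L) (hε₀ : 0 < ε₀) (hε₀1 : ε₀ ≤ 1)
    (τ₁ aN bN : ℝ)
    (hτ : τ₁ = max 1 (d / (Cconst α * α * L)))
    (ha : aN = (τ₁ * Real.log n / n) ^ (1/α))
    (hb : bN = (n : ℝ) ^ (-(1/α)))
    (x : ℝ) (hx : 0 ≤ x) (hxε : aN + bN * x ≤ ε₀)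
    (μ : Measure (Euc d)) (K : Set (Euc d)) (hμK : MemM α L ε₀ μ K) :
    jointLaw n μ {ω : Fin n → Euc d | 2 * aN + 2 * bN * x ≤ hausdorffDist (hullOf ω) K}
      ≤ ENNReal.ofReal (12 ^ d * Real.exp (-(Cconst α * L * x ^ α))) :=
  stmt0_general d n hd hn α L ε₀ hα hL hε₀1 τ₁ aN bN hτ ha hb x hx hxε μ K hμK
end
end

section
/- Let d ≥ 1 be an integer, 0 < r ≤ 1, let K ∈ K_{d,r}^(1), and let μ be the uniform probability measure on K (normalized Lebesgue measure restricted to K). Then for every u ∈ S^{d−1} and every ε ∈ [0,r], μ(C_K(u,ε)) ≥ (2β_{d−1}·r^{(d−1)/2}/(β_d·(d+1)))·ε^{(d+1)/2}. In particular, (μ,K) belongs to the class M((d+1)/2, 2β_{d−1}·r^{(d−1)/2}/(β_d·(d+1)), r). -/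
open MeasureTheory Metric Set
open scoped RealInnerProductSpace ENNReal NNReal

noncomputable section

/-!
Let `x ∈ ∂K` maximise `⟪u, ·⟫`. The rolling condition at `x` gives `closedBall c r ⊆ K` with
`h_K(u) ≤ ⟪u, c⟫ + r`, so the translate by `c` of any subset of `closedBall 0 r` lying in the slab
`r - ε ≤ ⟪u, ·⟫` lies in `C_K(u, ε)`. We use the paraboloid slice
`{z | r - ε ≤ ⟪u, z⟫ ≤ r, ‖z - ⟪u, z⟫ • u‖² ≤ r (r - ⟪u, z⟫)}` rather than the cap of the ball:
it is still inside the ball (as `r (r - t) ≤ r² - t²` for `0 ≤ t`), and by Fubini its volume is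
exactly `β_{d-1} ∫_{r-ε}^r (r (r - t))^{(d-1)/2} dt = β_{d-1} r^{(d-1)/2} ε^{(d+1)/2} / ((d+1)/2)`.
Dividing by `vol K ≤ β_d` gives the bound.
-/

lemma volume_closedBall_zero_eq_mul_unitBallVol (m : ℕ) {R : ℝ} (hR : 0 ≤ R) :
    volume (closedBall (0 : Euc m) R)
      = ENNReal.ofReal (R ^ m) * ENNReal.ofReal (unitBallVol m) := by
  rw [Measure.addHaar_closedBall' volume 0 hR, finrank_euclideanSpace_fin, unitBallVol,
    ENNReal.ofReal_toReal measure_closedBall_lt_top.ne]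

lemma unitBallVol_pos (m : ℕ) : 0 < unitBallVol m :=
  ENNReal.toReal_pos (measure_closedBall_pos volume 0 one_pos).ne' measure_closedBall_lt_top.ne

lemma volume_setOf_sum_sq_le (m : ℕ) {c : ℝ} (hc : 0 ≤ c) :
    volume {w : Fin m → ℝ | ∑ j, w j ^ 2 ≤ c}
      = ENNReal.ofReal (√c ^ m) * ENNReal.ofReal (unitBallVol m) := by
  have hpre : {w : Fin m → ℝ | ∑ j, w j ^ 2 ≤ c} = WithLp.toLp 2 ⁻¹' closedBall 0 √c := by
    ext w
    simp [EuclideanSpace.norm_eq, Real.sqrt_le_sqrt_iff hc]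
  rw [hpre, (PiLp.volume_preserving_toLp (Fin m)).measure_preimage
    measurableSet_closedBall.nullMeasurableSet,
    volume_closedBall_zero_eq_mul_unitBallVol m (Real.sqrt_nonneg c)]

lemma volume_setOf_fst_mem_and_sum_sq_le (m : ℕ) {S : Set ℝ} (hS : MeasurableSet S)
    {g : ℝ → ℝ} (hg : Measurable g) (hg0 : ∀ t ∈ S, 0 ≤ g t) :
    volume {p : ℝ × (Fin m → ℝ) | p.1 ∈ S ∧ ∑ j, p.2 j ^ 2 ≤ g p.1}
      = ∫⁻ t in S, ENNReal.ofReal (√(g t) ^ m) * ENNReal.ofReal (unitBallVol m) := by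
  rw [Measure.volume_eq_prod, Measure.prod_apply (by measurability), ← lintegral_indicator hS]
  congr 1 with t
  by_cases ht : t ∈ S
  · simp [ht, volume_setOf_sum_sq_le m (hg0 t ht)]
  · simp [ht]

lemma exists_orthonormalBasis_apply_zero_eq {E : Type*} [NormedAddCommGroup E]
    [InnerProductSpace ℝ E] [FiniteDimensional ℝ E] {n : ℕ} (hn : Module.finrank ℝ E = n + 1)
    {u : E} (hu : ‖u‖ = 1) : ∃ b : OrthonormalBasis (Fin (n + 1)) ℝ E, b 0 = u := by
  have hon : Orthonormal ℝ (({0} : Set (Fin (n + 1))).domRestrict fun _ => u) :=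
    ⟨fun _ => hu, fun i j hij => absurd (Subtype.ext (i.2.trans j.2.symm)) hij⟩
  obtain ⟨b, hb⟩ := hon.exists_orthonormalBasis_extension_of_card_eq (by simpa using hn)
  exact ⟨b, hb 0 rfl⟩

lemma norm_sub_inner_smul_sq_eq_sum {E : Type*} [NormedAddCommGroup E]
    [InnerProductSpace ℝ E] {n : ℕ} (b : OrthonormalBasis (Fin (n + 1)) ℝ E) (z : E) :
    ‖z - ⟪b 0, z⟫ • b 0‖ ^ 2 = ∑ j : Fin n, ⟪b j.succ, z⟫ ^ 2 := by
  rw [← b.sum_sq_inner_right, Fin.sum_univ_succ]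
  simp [inner_sub_right, real_inner_smul_right, b.inner_eq_zero (Fin.succ_ne_zero _)]

lemma volume_setOf_inner_mem_and_sq_le (m : ℕ) {u : Euc (m + 1)} (hu : ‖u‖ = 1)
    {S : Set ℝ} (hS : MeasurableSet S) {g : ℝ → ℝ} (hg : Measurable g)
    (hg0 : ∀ t ∈ S, 0 ≤ g t) :
    volume {z : Euc (m + 1) | ⟪u, z⟫ ∈ S ∧ ‖z - ⟪u, z⟫ • u‖ ^ 2 ≤ g ⟪u, z⟫}
      = ∫⁻ t in S, ENNReal.ofReal (√(g t) ^ m) * ENNReal.ofReal (unitBallVol m) := by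
  obtain ⟨b, rfl⟩ := exists_orthonormalBasis_apply_zero_eq finrank_euclideanSpace_fin hu
  let F : Euc (m + 1) → ℝ × (Fin m → ℝ) :=
    MeasurableEquiv.piFinSuccAbove (fun _ => ℝ) 0 ∘ (MeasurableEquiv.toLp 2 _).symm ∘ b.repr
  have hF : MeasurePreserving F volume volume :=
    (volume_preserving_piFinSuccAbove (fun _ => ℝ) 0).comp
      ((EuclideanSpace.volume_preserving_symm_measurableEquiv_toLp _).comp
        b.measurePreserving_repr)
  have hpre : {z : Euc (m + 1) | ⟪b 0, z⟫ ∈ S ∧ ‖z - ⟪b 0, z⟫ • b 0‖ ^ 2 ≤ g ⟪b 0, z⟫}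
      = F ⁻¹' {p | p.1 ∈ S ∧ ∑ j, p.2 j ^ 2 ≤ g p.1} := by
    ext z
    simp [F, norm_sub_inner_smul_sq_eq_sum, b.repr_apply_apply, Fin.tail]
  rw [hpre, hF.measure_preimage (by measurability), volume_setOf_fst_mem_and_sum_sq_le m hS hg hg0]

lemma integral_sub_rpow (a b : ℝ) {p : ℝ} (hp : -1 < p) :
    ∫ t in a..b, (b - t) ^ p = (b - a) ^ (p + 1) / (p + 1) := by
  rw [intervalIntegral.integral_comp_sub_left (fun s => s ^ p), sub_self,
    integral_rpow (Or.inl hp), Real.zero_rpow (by linarith), sub_zero]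

lemma sqrt_pow_eq_rpow (m : ℕ) {x : ℝ} (hx : 0 ≤ x) : √x ^ m = x ^ ((m : ℝ) / 2) := by
  rw [Real.sqrt_eq_rpow, ← Real.rpow_natCast, ← Real.rpow_mul hx]
  ring_nf

lemma lintegral_sqrt_mul_sub_pow (m : ℕ) {r ε : ℝ} (hr : 0 ≤ r) (hε : 0 ≤ ε) :
    ∫⁻ t in Icc (r - ε) r, ENNReal.ofReal (√(r * (r - t)) ^ m)
      = ENNReal.ofReal (r ^ ((m : ℝ) / 2) * (ε ^ ((m : ℝ) / 2 + 1) / ((m : ℝ) / 2 + 1))) := by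
  have hfactor : EqOn (fun t => ENNReal.ofReal (√(r * (r - t)) ^ m))
      (fun t => ENNReal.ofReal (r ^ ((m : ℝ) / 2) * (r - t) ^ ((m : ℝ) / 2))) (Icc (r - ε) r) :=
    fun t ht => by
      simp only
      rw [sqrt_pow_eq_rpow m (mul_nonneg hr (sub_nonneg.2 ht.2)),
        Real.mul_rpow hr (sub_nonneg.2 ht.2)]
  have hp : -1 < (m : ℝ) / 2 := by linarith [(by positivity : (0 : ℝ) ≤ (m : ℝ) / 2)]
  rw [setLIntegral_congr_fun measurableSet_Icc hfactor, ← ofReal_integral_eq_lintegral_ofReal,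
    integral_Icc_eq_integral_Ioc, ← intervalIntegral.integral_of_le (by linarith),
    intervalIntegral.integral_const_mul, integral_sub_rpow _ _ hp, sub_sub_cancel]
  · exact (continuous_const.mul ((Real.continuous_rpow_const (by positivity)).comp
      (continuous_const.sub continuous_id))).integrableOn_Icc
  · exact ae_restrict_of_forall_mem measurableSet_Icc fun t ht =>
      mul_nonneg (Real.rpow_nonneg hr _) (Real.rpow_nonneg (sub_nonneg.2 ht.2) _)

def paraboloidCap {d : ℕ} (u : Euc d) (r ε : ℝ) : Set (Euc d) :=
  {z | ⟪u, z⟫ ∈ Icc (r - ε) r ∧ ‖z - ⟪u, z⟫ • u‖ ^ 2 ≤ r * (r - ⟪u, z⟫)}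

lemma volume_paraboloidCap (m : ℕ) {u : Euc (m + 1)} (hu : ‖u‖ = 1) {r ε : ℝ} (hr : 0 ≤ r)
    (hε : 0 ≤ ε) :
    volume (paraboloidCap u r ε) = ENNReal.ofReal
      (unitBallVol m * r ^ ((m : ℝ) / 2) * (ε ^ ((m : ℝ) / 2 + 1) / ((m : ℝ) / 2 + 1))) := by
  rw [paraboloidCap, volume_setOf_inner_mem_and_sq_le m hu measurableSet_Icc (by fun_prop)
      fun t ht => mul_nonneg hr (sub_nonneg.2 ht.2),
    lintegral_mul_const' _ _ ENNReal.ofReal_ne_top, lintegral_sqrt_mul_sub_pow m hr hε,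
    ← ENNReal.ofReal_mul (by positivity)]
  ring_nf

lemma paraboloidCap_subset_closedBall {d : ℕ} {u : Euc d} (hu : ‖u‖ = 1) {r ε : ℝ}
    (hεr : ε ≤ r) : paraboloidCap u r ε ⊆ closedBall 0 r := by
  rintro z ⟨⟨hz₁, hz₂⟩, hz₃⟩
  have hpyth : ‖z‖ ^ 2 = ⟪u, z⟫ ^ 2 + ‖z - ⟪u, z⟫ • u‖ ^ 2 := by
    have horth : ⟪⟪u, z⟫ • u, z - ⟪u, z⟫ • u⟫ = 0 := by
      rw [real_inner_smul_left, inner_sub_right, real_inner_smul_right,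
        real_inner_self_eq_norm_sq, hu]
      ring
    simp only [sq]
    simpa [norm_smul, hu] using norm_add_sq_eq_norm_sq_add_norm_sq_of_inner_eq_zero _ _ horth
  rw [mem_closedBall_zero_iff]
  nlinarith

lemma suppFn_eq_inner_of_isMaxOn {d : ℕ} {K : Set (Euc d)} {u x : Euc d} (hx : x ∈ K)
    (hmax : IsMaxOn (fun y => ⟪u, y⟫) K x) : suppFn K u = ⟪u, x⟫ :=
  IsGreatest.csSup_eq ⟨mem_image_of_mem _ hx, forall_mem_image.2 fun _ hy => hmax hy⟩

lemma mem_frontier_of_isMaxOn_inner {E : Type*} [NormedAddCommGroup E] [InnerProductSpace ℝ E]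
    {K : Set E} (hK : IsClosed K) {u x : E} (hu : u ≠ 0) (hx : x ∈ K)
    (hmax : IsMaxOn (fun y => ⟪u, y⟫) K x) : x ∈ frontier K := by
  rw [hK.frontier_eq]
  refine ⟨hx, fun hint => hu ?_⟩
  have hzero := (hmax.isLocalMax (mem_interior_iff_mem_nhds.1 hint)).hasFDerivAt_eq_zero
    (innerSL ℝ u).hasFDerivAt
  simpa using congrArg (· u) hzero

lemma exists_closedBall_subset_suppFn_le_inner_add {d : ℕ} {r : ℝ} {K : Set (Euc d)}
    (hK : IsCompact K) (hne : K.Nonempty) (hroll : Rolling r K) {u : Euc d} (hu : ‖u‖ = 1) :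
    ∃ c, closedBall c r ⊆ K ∧ suppFn K u ≤ ⟪u, c⟫ + r := by
  obtain ⟨x, hxK, hmax⟩ := hK.exists_isMaxOn hne (innerSL ℝ u).continuous.continuousOn
  obtain ⟨c, hxc, hcK⟩ :=
    hroll x (mem_frontier_of_isMaxOn_inner hK.isClosed (norm_ne_zero_iff.1 (by simp [hu])) hxK hmax)
  refine ⟨c, hcK, ?_⟩
  rw [suppFn_eq_inner_of_isMaxOn hxK hmax]
  calc ⟪u, x⟫ = ⟪u, c⟫ + ⟪u, x - c⟫ := by rw [inner_sub_right]; ring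
    _ ≤ ⟪u, c⟫ + ‖u‖ * ‖x - c‖ := by gcongr; exact real_inner_le_norm u (x - c)
    _ ≤ ⟪u, c⟫ + r := by rw [hu, one_mul, ← dist_eq_norm]; gcongr; exact hxc

open Pointwise in
lemma vadd_paraboloidCap_subset_cap {d : ℕ} {K : Set (Euc d)} {u c : Euc d} (hu : ‖u‖ = 1)
    {r ε : ℝ} (hε : ε ∈ Icc 0 r) (hcK : closedBall c r ⊆ K) (hsupp : suppFn K u ≤ ⟪u, c⟫ + r) :
    c +ᵥ paraboloidCap u r ε ⊆ cap K u ε := by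
  rintro _ ⟨z, hz, rfl⟩
  refine ⟨hcK ?_, ?_⟩
  · simpa [mem_closedBall, dist_eq_norm] using paraboloidCap_subset_closedBall hu hε.2 hz
  · simp only [vadd_eq_add, inner_add_right]
    linarith [hz.1.1]

lemma unifOn_apply_of_subset {d : ℕ} {K A : Set (Euc d)} (hA : A ⊆ K) :
    unifOn K A = (volume K)⁻¹ * volume A := by
  rw [unifOn, Measure.smul_apply, smul_eq_mul, Measure.restrict_eq_self _ hA]

lemma isProbabilityMeasure_unifOn {d : ℕ} {K : Set (Euc d)} (h0 : volume K ≠ 0)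
    (htop : volume K ≠ ∞) : IsProbabilityMeasure (unifOn K) :=
  ProbabilityTheory.cond_isProbabilityMeasure_of_finite h0 htop

lemma measSupp_subset_of_isClosed {d : ℕ} {μ : Measure (Euc d)} {K : Set (Euc d)}
    (hK : IsClosed K) (hμ : μ Kᶜ = 0) : measSupp μ ⊆ K :=
  fun _ hx => by_contra fun hxK => hx ⟨Kᶜ, ⟨hK.isOpen_compl, hμ⟩, hxK⟩

lemma unifOn_compl {d : ℕ} {K : Set (Euc d)} (hK : MeasurableSet K) : unifOn K Kᶜ = 0 := by
  simp [unifOn, Measure.restrict_apply' hK]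

open Pointwise in
theorem ofReal_le_unifOn_cap {m : ℕ} {r : ℝ} {K : Set (Euc (m + 1))} (hK : K ∈ Kdr1 (m + 1) r)
    {u : Euc (m + 1)} (hu : ‖u‖ = 1) {ε : ℝ} (hε : ε ∈ Icc 0 r) :
    ENNReal.ofReal (2 * unitBallVol m * r ^ ((m : ℝ) / 2) / (unitBallVol (m + 1) * ((m : ℝ) + 2))
        * ε ^ ((m : ℝ) / 2 + 1)) ≤ unifOn K (cap K u ε) := by
  obtain ⟨⟨-, hcomp, hint⟩, hball, hroll⟩ := hK
  obtain ⟨c, hcK, hsupp⟩ :=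
    exists_closedBall_subset_suppFn_le_inner_add hcomp (hint.mono interior_subset) hroll hu
  have hr : 0 ≤ r := hε.1.trans hε.2
  have hvolK : volume K ≤ ENNReal.ofReal (unitBallVol (m + 1)) := by
    rw [unitBallVol, ENNReal.ofReal_toReal measure_closedBall_lt_top.ne]
    exact measure_mono hball
  have hβ := unitBallVol_pos (m + 1)
  calc _ = (ENNReal.ofReal (unitBallVol (m + 1)))⁻¹ * volume (paraboloidCap u r ε) := by
        rw [volume_paraboloidCap m hu hr hε.1, ← ENNReal.ofReal_inv_of_pos hβ,
          ← ENNReal.ofReal_mul (inv_nonneg.2 hβ.le)]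
        congr 1
        field_simp
    _ ≤ (volume K)⁻¹ * volume (c +ᵥ paraboloidCap u r ε) := by
        rw [measure_vadd]
        gcongr
    _ ≤ (volume K)⁻¹ * volume (cap K u ε) := by
        gcongr
        exact vadd_paraboloidCap_subset_cap hu hε hcK hsupp
    _ = unifOn K (cap K u ε) := (unifOn_apply_of_subset fun _ hx => hx.1).symm

theorem stmt8_general (d : ℕ) (r : ℝ)
    (K : Set (Euc d)) (hK : K ∈ Kdr1 d r) :
    (∀ u : Euc d, ‖u‖ = 1 → ∀ ε : ℝ, ε ∈ Icc 0 r →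
        ENNReal.ofReal
            ((2 * unitBallVol (d-1) * r ^ (((d:ℝ)-1)/2) / (unitBallVol d * ((d:ℝ)+1)))
              * ε ^ (((d:ℝ)+1)/2))
          ≤ unifOn K (cap K u ε)) ∧
      MemM (((d:ℝ)+1)/2)
        (2 * unitBallVol (d-1) * r ^ (((d:ℝ)-1)/2) / (unitBallVol d * ((d:ℝ)+1)))
        r (unifOn K) K := by
  have hcap : ∀ u : Euc d, ‖u‖ = 1 → ∀ ε : ℝ, ε ∈ Icc 0 r →
      ENNReal.ofReal ((2 * unitBallVol (d-1) * r ^ (((d:ℝ)-1)/2) / (unitBallVol d * ((d:ℝ)+1)))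
        * ε ^ (((d:ℝ)+1)/2)) ≤ unifOn K (cap K u ε) := by
    intro u hu ε hε
    rcases d with _ | m
    · simp [Subsingleton.elim u 0] at hu
    · convert ofReal_le_unifOn_cap hK hu hε using 5 <;> push_cast <;> ring_nf
  obtain ⟨hbody, hball, -⟩ := hK
  have hcomp : IsCompact K := hbody.2.1
  have hvol0 : volume K ≠ 0 :=
    ((isOpen_interior.measure_pos volume hbody.2.2).trans_le (measure_mono interior_subset)).ne'
  exact ⟨hcap, isProbabilityMeasure_unifOn hvol0 hcomp.measure_lt_top.ne, hbody, hball,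
    measSupp_subset_of_isClosed hcomp.isClosed (unifOn_compl hcomp.measurableSet), hcap⟩

theorem stmt8 (d : ℕ) (hd : 1 ≤ d) (r : ℝ) (hr0 : 0 < r) (hr1 : r ≤ 1)
    (K : Set (Euc d)) (hK : K ∈ Kdr1 d r) :
    (∀ u : Euc d, ‖u‖ = 1 → ∀ ε : ℝ, ε ∈ Icc 0 r →
        ENNReal.ofReal
            ((2 * unitBallVol (d-1) * r ^ (((d:ℝ)-1)/2) / (unitBallVol d * ((d:ℝ)+1)))
              * ε ^ (((d:ℝ)+1)/2))
          ≤ unifOn K (cap K u ε)) ∧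
      MemM (((d:ℝ)+1)/2)
        (2 * unitBallVol (d-1) * r ^ (((d:ℝ)-1)/2) / (unitBallVol d * ((d:ℝ)+1)))
        r (unifOn K) K :=
  stmt8_general d r K hK
end
end
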